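/- Euler field in conjugate coordinates: let d₁ ≠ 0 and d₂,…,d_r ∈ ℝ with d_r = 1 and d_i + d_{r-i+1} = d₁ + 1 for all i. On {t ∈ ℝʳ : t¹ > 0} define s¹ = -t¹, sⁱ = tⁱ (t¹)^{(d₁-2dᵢ)/d₁} for 1 < i < r, and sʳ = ½ Σᵢ tⁱ t^{r-i+1} (t¹)^{-2/d₁ - 1}. Let E = Σᵢ dᵢ tⁱ ∂_{tⁱ}. Then E(s¹) = d₁ s¹, E(sʲ) = (d₁ - dⱼ) sʲ = -d̃ⱼ sʲ for 1 < j < r, and E(sʳ) = -sʳ, where d̃₁ = -d₁, d̃ⱼ = dⱼ - d₁, d̃_r = 1. In other words, the pushforward of E is -Σⱼ d̃ⱼ sʲ ∂_{sʲ}. -/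

import Mathlib

open scoped BigOperators

/-
The Euler field is the vector field `v(t) = (dᵢ tᵢ)ᵢ`, so `E f = Df(t) v(t)`, and `E` is a derivation.
Call `w` a weight of `f` at `t` if `E f = w f` there. Then `tⁱ` has weight `dᵢ`, a real power `(t¹)^a`
has weight `a d₁`, and weights add under products. Each `sʲ` is (a sum of) such monomials: `sʲ` for
`1 < j < r` has weight `dⱼ + (d₁ - 2dⱼ) = d₁ - dⱼ`, and every summand of `sʳ` has weight
`dᵢ + d_{r-i+1} + (-2 - d₁) = -1` by the pairing `dᵢ + d_{r-i+1} = d₁ + 1`.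
-/

/-- Partial derivative `∂ₖ g` at `t`. -/
noncomputable def pd {r : ℕ} (k : Fin r) (g : (Fin r → ℝ) → ℝ) (t : Fin r → ℝ) : ℝ :=
  fderiv ℝ g t (Pi.single k 1)

/-- The conjugate flat coordinates (0-based indices, dimension `r + 2 ≥ 2`):
`s¹ = -t¹`, `sⁱ = tⁱ (t¹)^((d₁-2dᵢ)/d₁)` for middle indices, and
`sʳ = ½ ∑ᵢ tⁱ t^{r-i+1} (t¹)^(-2/d₁ - 1)`. -/
noncomputable def sCoord (r : ℕ) (ds : Fin (r + 2) → ℝ) (j : Fin (r + 2))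
    (t : Fin (r + 2) → ℝ) : ℝ :=
  if j = 0 then -t 0
  else if j = Fin.last (r + 1) then
    (1 / 2) * ∑ i, t i * t i.rev * t 0 ^ (-2 / ds 0 - 1)
  else t j * t 0 ^ ((ds 0 - 2 * ds j) / ds 0)

section EulerWeight

variable {E : Type*} [NormedAddCommGroup E] [NormedSpace ℝ E]

def HasEulerWeight (v : E) (f : E → ℝ) (t : E) (w : ℝ) : Prop :=
  ∃ f' : E →L[ℝ] ℝ, HasFDerivAt f f' t ∧ f' v = w * f t

namespace HasEulerWeight

variable {v : E} {f g : E → ℝ} {t : E} {w w₁ w₂ : ℝ}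

theorem fderiv_apply (h : HasEulerWeight v f t w) : fderiv ℝ f t v = w * f t := by
  obtain ⟨f', hf', hv⟩ := h
  rw [hf'.fderiv, hv]

theorem of_weight_eq (h : HasEulerWeight v f t w₁) (hw : w₁ = w₂) : HasEulerWeight v f t w₂ :=
  hw ▸ h

theorem neg (h : HasEulerWeight v f t w) : HasEulerWeight v (fun x => -f x) t w := by
  obtain ⟨f', hf', hv⟩ := h
  exact ⟨-f', hf'.neg, by simp [hv]⟩

theorem const_mul (c : ℝ) (h : HasEulerWeight v f t w) :
    HasEulerWeight v (fun x => c * f x) t w := by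
  obtain ⟨f', hf', hv⟩ := h
  exact ⟨c • f', hf'.const_mul c, by simp [hv]; ring⟩

theorem mul (hf : HasEulerWeight v f t w₁) (hg : HasEulerWeight v g t w₂) :
    HasEulerWeight v (fun x => f x * g x) t (w₁ + w₂) := by
  obtain ⟨f', hf', hfv⟩ := hf
  obtain ⟨g', hg', hgv⟩ := hg
  exact ⟨f t • g' + g t • f', hf'.mul hg', by simp [hfv, hgv]; ring⟩

theorem rpow_const (h : HasEulerWeight v f t w) (hf : f t ≠ 0) (a : ℝ) :
    HasEulerWeight v (fun x => f x ^ a) t (a * w) := by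
  obtain ⟨f', hf', hv⟩ := h
  refine ⟨(a * f t ^ (a - 1)) • f', hf'.rpow_const (Or.inl hf), ?_⟩
  simp only [smul_apply, smul_eq_mul, hv, Real.rpow_sub_one hf]
  field_simp

theorem sum {ι : Type*} (s : Finset ι) {F : ι → E → ℝ} (h : ∀ i ∈ s, HasEulerWeight v (F i) t w) :
    HasEulerWeight v (fun x => ∑ i ∈ s, F i x) t w := by
  choose! F' hF' hv using h
  refine ⟨∑ i ∈ s, F' i, HasFDerivAt.fun_sum hF', ?_⟩
  simp only [sum_apply, Finset.mul_sum]
  exact Finset.sum_congr rfl hv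

end HasEulerWeight

end EulerWeight

section Coordinates

variable {n : ℕ}

theorem sum_mul_pd_eq_fderiv (c : Fin n → ℝ) (f : (Fin n → ℝ) → ℝ) (t : Fin n → ℝ) :
    ∑ i, c i * pd i f t = fderiv ℝ f t c := by
  conv_rhs => rw [pi_eq_sum_univ' c]
  simp [pd]

theorem hasEulerWeight_apply (d t : Fin n → ℝ) (i : Fin n) :
    HasEulerWeight (fun k => d k * t k) (fun x => x i) t (d i) :=
  ⟨ContinuousLinearMap.proj i, hasFDerivAt_apply i t, rfl⟩

end Coordinates

theorem euler_field_in_conjugate_coordinates_general (r : ℕ) (ds : Fin (r + 2) → ℝ)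
    (h0 : ds 0 ≠ 0)
    (hpair : ∀ i, ds i + ds i.rev = ds 0 + 1)
    (t : Fin (r + 2) → ℝ) (ht : 0 < t 0) :
    (∑ i, ds i * t i * pd i (sCoord r ds 0) t) = ds 0 * sCoord r ds 0 t ∧
    (∀ j, j ≠ 0 → j ≠ Fin.last (r + 1) →
      (∑ i, ds i * t i * pd i (sCoord r ds j) t) = (ds 0 - ds j) * sCoord r ds j t ∧
      (ds 0 - ds j) * sCoord r ds j t = -((ds j - ds 0) * sCoord r ds j t)) ∧
    (∑ i, ds i * t i * pd i (sCoord r ds (Fin.last (r + 1))) t)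
      = -sCoord r ds (Fin.last (r + 1)) t := by
  have coord := hasEulerWeight_apply ds t
  have pow₀ (a : ℝ) := (coord 0).rpow_const ht.ne' a
  have hlast0 : Fin.last (r + 1) ≠ 0 := Fin.last_pos.ne'
  refine ⟨?_, fun j hj0 hjl => ⟨?_, by ring⟩, ?_⟩ <;> rw [sum_mul_pd_eq_fderiv]
  · have hs : sCoord r ds 0 = fun x => -x 0 := by ext; simp [sCoord]
    exact hs ▸ (coord 0).neg.fderiv_apply
  · have hs : sCoord r ds j = fun x => x j * x 0 ^ ((ds 0 - 2 * ds j) / ds 0) := by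
      ext; simp [sCoord, hj0, hjl]
    refine hs ▸ (((coord j).mul (pow₀ _)).of_weight_eq ?_).fderiv_apply
    field_simp
    ring
  · have hs : sCoord r ds (Fin.last (r + 1)) =
        fun x => 1 / 2 * ∑ i, x i * x i.rev * x 0 ^ (-2 / ds 0 - 1) := by
      ext; simp [sCoord, hlast0]
    have term (i : Fin (r + 2)) :=
      (((coord i).mul (coord i.rev)).mul (pow₀ (-2 / ds 0 - 1))).of_weight_eq (w₂ := -1) (by
        rw [hpair i]; field_simp; ring)
    rw [hs, (HasEulerWeight.sum _ fun i _ => term i).const_mul (1 / 2) |>.fderiv_apply]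
    ring

/-- Euler field in conjugate coordinates: with `d₁ ≠ 0`, `d_r = 1`,
`dᵢ + d_{r-i+1} = d₁ + 1`, and `E = ∑ dᵢ tⁱ ∂ᵢ`, one has `E(s¹) = d₁ s¹`,
`E(sʲ) = (d₁ - dⱼ) sʲ` for middle `j`, and `E(sʳ) = -sʳ`;
i.e. the pushforward of `E` is `-∑ d̃ⱼ sʲ ∂_{sʲ}`. -/
theorem euler_field_in_conjugate_coordinates (r : ℕ) (ds : Fin (r + 2) → ℝ)
    (h0 : ds 0 ≠ 0) (hlast : ds (Fin.last (r + 1)) = 1)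
    (hpair : ∀ i, ds i + ds i.rev = ds 0 + 1)
    (t : Fin (r + 2) → ℝ) (ht : 0 < t 0) :
    (∑ i, ds i * t i * pd i (sCoord r ds 0) t) = ds 0 * sCoord r ds 0 t ∧
    (∀ j, j ≠ 0 → j ≠ Fin.last (r + 1) →
      (∑ i, ds i * t i * pd i (sCoord r ds j) t) = (ds 0 - ds j) * sCoord r ds j t ∧
      (ds 0 - ds j) * sCoord r ds j t = -((ds j - ds 0) * sCoord r ds j t)) ∧
    (∑ i, ds i * t i * pd i (sCoord r ds (Fin.last (r + 1))) t)
      = -sCoord r ds (Fin.last (r + 1)) t :=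
  euler_field_in_conjugate_coordinates_general r ds h0 hpair t ht
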